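/- Let η², η²(M), E, D ≥ 0 and constants C_est, C_drel > 0, θ ∈ (0, 1/(1 + C_est·C_drel)), δ > 0, and set λ = (1 − (1 + C_est·C_drel)θ)/(1 + δ). Suppose η² ≤ R + (1+δ)·η*² + C_est·D, that η*² ≤ λ·η², and D ≤ C_drel·R, where R denotes the estimator restricted to refined elements. Then R ≥ θ·η². -/

import Mathlib

/-!
Discrete reliability turns the perturbation estimate into
`η² ≤ (1 + C_est C_drel) R + (1 + δ) η*²`, and the strict reduction `(1 + δ) η*² ≤ (1 - κ θ) η²`
with `κ = 1 + C_est C_drel` absorbs the last term, leaving `κ θ η² ≤ κ R`.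
-/

lemma mul_le_of_le_div {a b c d : ℝ} (hc : 0 < c) (h : a ≤ b / c * d) : c * a ≤ b * d := by
  calc c * a ≤ c * (b / c * d) := mul_le_mul_of_nonneg_left h hc.le
    _ = b * d := by field_simp

lemma le_add_mul_of_perturbation_of_reliability {η2 S D R Cest Cdrel : ℝ} (hCest : 0 ≤ Cest)
    (hpert : η2 ≤ R + S + Cest * D) (hrel : D ≤ Cdrel * R) :
    η2 ≤ (1 + Cest * Cdrel) * R + S := by
  have : Cest * D ≤ Cest * (Cdrel * R) := mul_le_mul_of_nonneg_left hrel hCest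
  linarith

lemma mul_le_of_le_add_one_sub_mul {η2 R κ θ : ℝ} (hκ : 0 < κ)
    (h : η2 ≤ κ * R + (1 - κ * θ) * η2) : θ * η2 ≤ R := by
  have : κ * (θ * η2) ≤ κ * R := by linarith
  exact le_of_mul_le_mul_left this hκ

theorem stmt_11_general (η2 ηs2 D R Cest Cdrel θ δ lam : ℝ)
    (hCest : 0 < Cest) (hCdrel : 0 < Cdrel)
    (hδ : 0 < δ)
    (hlam : lam = (1 - (1 + Cest * Cdrel) * θ) / (1 + δ))
    (h1 : η2 ≤ R + (1 + δ) * ηs2 + Cest * D)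
    (h2 : ηs2 ≤ lam * η2)
    (h3 : D ≤ Cdrel * R) :
    θ * η2 ≤ R := by
  have hreduction : (1 + δ) * ηs2 ≤ (1 - (1 + Cest * Cdrel) * θ) * η2 :=
    mul_le_of_le_div (by linarith) (hlam ▸ h2)
  have hbound := le_add_mul_of_perturbation_of_reliability hCest.le h1 h3
  exact mul_le_of_le_add_one_sub_mul (κ := 1 + Cest * Cdrel) (by positivity)
    (hbound.trans (by linarith))

theorem stmt_11 (η2 ηs2 E D R Cest Cdrel θ δ lam : ℝ)
    (hη2 : 0 ≤ η2) (hηs2 : 0 ≤ ηs2) (hE : 0 ≤ E) (hD : 0 ≤ D) (hR : 0 ≤ R)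
    (hCest : 0 < Cest) (hCdrel : 0 < Cdrel)
    (hθ : θ ∈ Set.Ioo 0 (1 / (1 + Cest * Cdrel))) (hδ : 0 < δ)
    (hlam : lam = (1 - (1 + Cest * Cdrel) * θ) / (1 + δ))
    (h1 : η2 ≤ R + (1 + δ) * ηs2 + Cest * D)
    (h2 : ηs2 ≤ lam * η2)
    (h3 : D ≤ Cdrel * R) :
    θ * η2 ≤ R :=
  stmt_11_general η2 ηs2 D R Cest Cdrel θ δ lam hCest hCdrel hδ hlam h1 h2 h3
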